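/- Any representation π of L_K(E,C,S) arising from an (E,C,S)-algebraic branching system factors through the abelianized algebra AL_K(E,C,S); that is, for all words γ, β in the multiplicative semigroup generated by the edges and ghost edges, π(γγ*βetaβ* − ββ*γγ*) = 0. Equivalently, for any such γ, β, the operators π(γγ*) and π(ββ*) are multiplication operators by characteristic functions of subsets of X and hence commute. -/
import Mathlib



/-- Generators of the Cohn–Leavitt algebra of a separated graph: one idempotent for
each vertex, and elements `e`, `e*` for each edge. -/
inductive CLGen (V E : Type) : Type
  | vert : V → CLGen V E
  | edge : E → CLGen V E
  | ghost : E → CLGen V E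

/-- The defining relations (E1), (E2), (SCK1), (SCK2) of the Cohn–Leavitt algebra
`L_K(E,C,S)` of a separated graph `(E,C)` with `S ⊆ C_fin`, as relations on the free
algebra over the generators. -/
inductive CLRel (K V E : Type) [Field K] (r s : E → V)
    (C S : Set (Set E)) (hSfin : ∀ X ∈ S, X.Finite) :
    FreeAlgebra K (CLGen V E) → FreeAlgebra K (CLGen V E) → Prop
  | vert_idem (v : V) :
      CLRel K V E r s C S hSfin
        (FreeAlgebra.ι K (CLGen.vert v) * FreeAlgebra.ι K (CLGen.vert v))
        (FreeAlgebra.ι K (CLGen.vert v))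
  | vert_orth (u v : V) (h : u ≠ v) :
      CLRel K V E r s C S hSfin
        (FreeAlgebra.ι K (CLGen.vert u) * FreeAlgebra.ι K (CLGen.vert v)) 0
  | e1l (e : E) :
      CLRel K V E r s C S hSfin
        (FreeAlgebra.ι K (CLGen.vert (s e)) * FreeAlgebra.ι K (CLGen.edge e))
        (FreeAlgebra.ι K (CLGen.edge e))
  | e1r (e : E) :
      CLRel K V E r s C S hSfin
        (FreeAlgebra.ι K (CLGen.edge e) * FreeAlgebra.ι K (CLGen.vert (r e)))
        (FreeAlgebra.ι K (CLGen.edge e))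
  | e2l (e : E) :
      CLRel K V E r s C S hSfin
        (FreeAlgebra.ι K (CLGen.vert (r e)) * FreeAlgebra.ι K (CLGen.ghost e))
        (FreeAlgebra.ι K (CLGen.ghost e))
  | e2r (e : E) :
      CLRel K V E r s C S hSfin
        (FreeAlgebra.ι K (CLGen.ghost e) * FreeAlgebra.ι K (CLGen.vert (s e)))
        (FreeAlgebra.ι K (CLGen.ghost e))
  | sck1_same (Y : Set E) (hY : Y ∈ C) (e : E) (he : e ∈ Y) :
      CLRel K V E r s C S hSfin
        (FreeAlgebra.ι K (CLGen.ghost e) * FreeAlgebra.ι K (CLGen.edge e))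
        (FreeAlgebra.ι K (CLGen.vert (r e)))
  | sck1_diff (Y : Set E) (hY : Y ∈ C) (e f : E) (he : e ∈ Y) (hf : f ∈ Y)
      (hef : e ≠ f) :
      CLRel K V E r s C S hSfin
        (FreeAlgebra.ι K (CLGen.ghost e) * FreeAlgebra.ι K (CLGen.edge f)) 0
  | sck2 (X : Set E) (hX : X ∈ S) (v : V) (hne : X.Nonempty) (hv : ∀ e ∈ X, s e = v) :
      CLRel K V E r s C S hSfin
        (FreeAlgebra.ι K (CLGen.vert v))
        (∑ e ∈ (hSfin X hX).toFinset,
          FreeAlgebra.ι K (CLGen.edge e) * FreeAlgebra.ι K (CLGen.ghost e))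

/-- The Cohn–Leavitt algebra `L_K(E,C,S)` of the triple `(E,C,S)`. -/
abbrev CohnLeavitt (K V E : Type) [Field K] (r s : E → V)
    (C S : Set (Set E)) (hSfin : ∀ X ∈ S, X.Finite) : Type :=
  RingQuot (CLRel K V E r s C S hSfin)

/-- The canonical image of a generator in `L_K(E,C,S)`. -/
noncomputable def clMk (K V E : Type) [Field K] (r s : E → V)
    (C S : Set (Set E)) (hSfin : ∀ X ∈ S, X.Finite) (g : CLGen V E) :
    CohnLeavitt K V E r s C S hSfin :=
  RingQuot.mkAlgHom K (CLRel K V E r s C S hSfin) (FreeAlgebra.ι K g)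


/-- The operator `φ ↦ χ_A · (φ ∘ g)` on the `K`-module of functions `Ω → K`. -/
noncomputable def compOp (K : Type) [Field K] {Ω : Type} (A : Set Ω) (g : Ω → Ω) :
    Module.End K (Ω → K) where
  toFun φ := A.indicator (φ ∘ g)
  map_add' φ ψ := by
    ext x; by_cases h : x ∈ A <;> simp [Set.indicator_apply, h]
  map_smul' c φ := by
    ext x; by_cases h : x ∈ A <;> simp [Set.indicator_apply, h]

/-- The evaluation of a word in the multiplicative semigroup generated by the edges
and ghost edges: `Sum.inl e` stands for the edge `e`, `Sum.inr e` for `e*`. -/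
noncomputable def wordEval (K V E : Type) [Field K] :
    List (E ⊕ E) → FreeAlgebra K (CLGen V E)
  | [] => 1
  | Sum.inl e :: t => FreeAlgebra.ι K (CLGen.edge e) * wordEval K V E t
  | Sum.inr e :: t => FreeAlgebra.ι K (CLGen.ghost e) * wordEval K V E t

/-- The letter-wise star operation. -/
def wordFlip {E : Type} : E ⊕ E → E ⊕ E
  | Sum.inl e => Sum.inr e
  | Sum.inr e => Sum.inl e

/-- The star `λ*` of a word `λ`. -/
noncomputable def wordStar (K V E : Type) [Field K] (l : List (E ⊕ E)) :
    FreeAlgebra K (CLGen V E) :=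
  wordEval K V E (l.reverse.map wordFlip)

section Aux

variable {K : Type} [Field K] {Ω : Type}

lemma compOp_apply (A : Set Ω) (g : Ω → Ω) (φ : Ω → K) (x : Ω) :
    compOp K A g φ x = A.indicator (φ ∘ g) x := rfl

lemma compOp_mul (A B : Set Ω) (g h : Ω → Ω) :
    compOp K A g * compOp K B h = compOp K (A ∩ g ⁻¹' B) (h ∘ g) := by
  apply LinearMap.ext; intro φ; funext x
  simp only [Module.End.mul_apply, compOp_apply, Function.comp_apply]
  by_cases hA : x ∈ A <;> by_cases hB : g x ∈ B <;>
    simp [compOp_apply, Set.indicator_apply, hA, hB]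

lemma compOp_congr (A : Set Ω) (g h : Ω → Ω) (hgh : ∀ x ∈ A, g x = h x) :
    compOp K A g = (compOp K A h : Module.End K (Ω → K)) := by
  apply LinearMap.ext; intro φ; funext x
  simp only [compOp_apply]
  by_cases hx : x ∈ A
  · rw [Set.indicator_of_mem hx, Set.indicator_of_mem hx, Function.comp_apply,
      Function.comp_apply, hgh x hx]
  · rw [Set.indicator_of_notMem hx, Set.indicator_of_notMem hx]

lemma compOp_one : (compOp K (Set.univ : Set Ω) id : Module.End K (Ω → K)) = 1 := by
  apply LinearMap.ext; intro φ; funext x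
  simp [compOp_apply]

variable (V E : Type)

lemma wordEval_append (u v : List (E ⊕ E)) :
    wordEval K V E (u ++ v) = wordEval K V E u * wordEval K V E v := by
  induction u with
  | nil => simp [wordEval]
  | cons a t ih => cases a <;> simp [wordEval, ih, mul_assoc]

lemma wordStar_cons (a : E ⊕ E) (t : List (E ⊕ E)) :
    wordStar K V E (a :: t) = wordStar K V E t * wordEval K V E [wordFlip a] := by
  unfold wordStar
  rw [List.reverse_cons, List.map_append, wordEval_append]
  simp

end Aux

/-- Any representation `π` of `L_K(E,C,S)` arising from an
`(E,C,S)`-algebraic branching system factors through the abelianized algebra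
`AL_K(E,C,S)`: for all words `γ, β` in the semigroup generated by the edges and
ghost edges, `π(γγ*)` and `π(ββ*)` are multiplication operators by characteristic
functions, and `π(γγ*ββ* − ββ*γγ*) = 0`. -/
theorem branching_system_representation_abelian
    (K V E Ω : Type) [Field K] (r s : E → V)
    (C : Set (Set E))
    (hC1 : ∀ Y ∈ C, Y.Nonempty)
    (hC2 : ∀ Y ∈ C, ∀ e ∈ Y, ∀ f ∈ Y, s e = s f)
    (hC3 : ∀ Y ∈ C, ∀ Z ∈ C, Y ≠ Z → Disjoint Y Z)
    (hC4 : ∀ e : E, ∃ Y ∈ C, e ∈ Y)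
    (S : Set (Set E)) (hSC : S ⊆ C) (hSfin : ∀ X ∈ S, X.Finite)
    -- an (E,C,S)-algebraic branching system on Ω
    (R : E → Set Ω) (D : V → Set Ω) (fe ge : E → Ω → Ω)
    (h1 : ∀ Y ∈ C, ∀ e ∈ Y, ∀ d ∈ Y, e ≠ d → Disjoint (R e) (R d))
    (h2 : ∀ u v : V, u ≠ v → Disjoint (D u) (D v))
    (h3 : ∀ e, R e ⊆ D (s e))
    (h4 : ∀ Y ∈ S, ∀ v : V, (∀ e ∈ Y, s e = v) → D v = ⋃ e ∈ Y, R e)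
    (h5 : ∀ e, Set.BijOn (fe e) (D (r e)) (R e))
    (h6 : ∀ e, Set.InvOn (ge e) (fe e) (D (r e)) (R e))
    -- π : the representation arising from the branching system
    (π : CohnLeavitt K V E r s C S hSfin →ₐ[K] Module.End K (Ω → K))
    (hπe : ∀ e : E, π (clMk K V E r s C S hSfin (CLGen.edge e)) = compOp K (R e) (ge e))
    (hπg : ∀ e : E, π (clMk K V E r s C S hSfin (CLGen.ghost e)) = compOp K (D (r e)) (fe e))
    (hπv : ∀ v : V, π (clMk K V E r s C S hSfin (CLGen.vert v)) = compOp K (D v) id) :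
    (∀ l : List (E ⊕ E), l ≠ [] → ∃ A : Set Ω,
      π (RingQuot.mkAlgHom K (CLRel K V E r s C S hSfin)
          (wordEval K V E l * wordStar K V E l)) = compOp K A id) ∧
    (∀ l₁ l₂ : List (E ⊕ E), l₁ ≠ [] → l₂ ≠ [] →
      π (RingQuot.mkAlgHom K (CLRel K V E r s C S hSfin)
          (wordEval K V E l₁ * wordStar K V E l₁ * (wordEval K V E l₂ * wordStar K V E l₂) -
            wordEval K V E l₂ * wordStar K V E l₂ * (wordEval K V E l₁ * wordStar K V E l₁))) = 0) := by
  classical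
  set Φ : FreeAlgebra K (CLGen V E) →ₐ[K] Module.End K (Ω → K) :=
    π.comp (RingQuot.mkAlgHom K (CLRel K V E r s C S hSfin)) with hΦdef
  have hΦ : ∀ x : FreeAlgebra K (CLGen V E),
      π (RingQuot.mkAlgHom K (CLRel K V E r s C S hSfin) x) = Φ x := fun x => rfl
  have hE : ∀ e : E, Φ (FreeAlgebra.ι K (CLGen.edge e)) = compOp K (R e) (ge e) :=
    fun e => hπe e
  have hG : ∀ e : E, Φ (FreeAlgebra.ι K (CLGen.ghost e)) = compOp K (D (r e)) (fe e) :=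
    fun e => hπg e
  have hgf : ∀ e, ∀ x ∈ D (r e), ge e (fe e x) = x := fun e => (h6 e).1
  have hfg : ∀ e, ∀ y ∈ R e, fe e (ge e y) = y := fun e => (h6 e).2
  have hge_maps : ∀ e, Set.MapsTo (ge e) (R e) (D (r e)) := by
    intro e y hy
    obtain ⟨x, hx, rfl⟩ := (h5 e).surjOn hy
    rw [hgf e x hx]; exact hx
  have hfe_maps : ∀ e, Set.MapsTo (fe e) (D (r e)) (R e) := fun e => (h5 e).mapsTo
  -- key induction
  have key : ∀ l : List (E ⊕ E), ∃ (A B : Set Ω) (g h : Ω → Ω),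
      Φ (wordEval K V E l) = compOp K A g ∧ Φ (wordStar K V E l) = compOp K B h ∧
      Set.MapsTo g A B ∧ Set.MapsTo h B A ∧
      (∀ x ∈ A, h (g x) = x) ∧ (∀ y ∈ B, g (h y) = y) := by
    intro l
    induction l with
    | nil =>
      refine ⟨Set.univ, Set.univ, id, id, ?_, ?_, fun x hx => hx, fun x hx => hx,
        fun x _ => rfl, fun x _ => rfl⟩ <;>
      · show Φ 1 = _
        rw [map_one, compOp_one]
    | cons a t ih =>
      obtain ⟨A, B, g, h, hA, hB, hgAB, hhBA, hhg, hgh⟩ := ih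
      have heval : Φ (wordEval K V E (a :: t)) =
          Φ (wordEval K V E [a]) * Φ (wordEval K V E t) := by
        rw [← map_mul]
        cases a <;> simp [wordEval]
      have hstar : Φ (wordStar K V E (a :: t)) =
          Φ (wordStar K V E t) * Φ (wordEval K V E [wordFlip a]) := by
        rw [← map_mul, wordStar_cons]
      cases a with
      | inl e =>
        refine ⟨R e ∩ ge e ⁻¹' A, B ∩ h ⁻¹' D (r e), g ∘ ge e, fe e ∘ h, ?_, ?_, ?_, ?_, ?_, ?_⟩
        · rw [heval, hA]
          show Φ (FreeAlgebra.ι K (CLGen.edge e) * 1) * _ = _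
          rw [map_mul, map_one, mul_one, hE, compOp_mul]
        · rw [hstar, hB]
          show _ * Φ (FreeAlgebra.ι K (CLGen.ghost e) * 1) = _
          rw [map_mul, map_one, mul_one, hG, compOp_mul]
        · rintro x ⟨hx1, hx2⟩
          refine ⟨hgAB hx2, ?_⟩
          show h (g (ge e x)) ∈ D (r e)
          rw [hhg _ hx2]
          exact hge_maps e hx1
        · rintro y ⟨hy1, hy2⟩
          refine ⟨hfe_maps e hy2, ?_⟩
          show ge e (fe e (h y)) ∈ A
          rw [hgf e _ hy2]
          exact hhBA hy1
        · rintro x ⟨hx1, hx2⟩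
          show fe e (h (g (ge e x))) = x
          rw [hhg _ hx2, hfg e x hx1]
        · rintro y ⟨hy1, hy2⟩
          show g (ge e (fe e (h y))) = y
          rw [hgf e _ hy2, hgh _ hy1]
      | inr e =>
        refine ⟨D (r e) ∩ fe e ⁻¹' A, B ∩ h ⁻¹' R e, g ∘ fe e, ge e ∘ h, ?_, ?_, ?_, ?_, ?_, ?_⟩
        · rw [heval, hA]
          show Φ (FreeAlgebra.ι K (CLGen.ghost e) * 1) * _ = _
          rw [map_mul, map_one, mul_one, hG, compOp_mul]
        · rw [hstar, hB]
          show _ * Φ (FreeAlgebra.ι K (CLGen.edge e) * 1) = _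
          rw [map_mul, map_one, mul_one, hE, compOp_mul]
        · rintro x ⟨hx1, hx2⟩
          refine ⟨hgAB hx2, ?_⟩
          show h (g (fe e x)) ∈ R e
          rw [hhg _ hx2]
          exact hfe_maps e hx1
        · rintro y ⟨hy1, hy2⟩
          refine ⟨hge_maps e hy2, ?_⟩
          show fe e (ge e (h y)) ∈ A
          rw [hfg e _ hy2]
          exact hhBA hy1
        · rintro x ⟨hx1, hx2⟩
          show ge e (h (g (fe e x))) = x
          rw [hhg _ hx2, hgf e x hx1]
        · rintro y ⟨hy1, hy2⟩
          show g (fe e (ge e (h y))) = y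
          rw [hfg e _ hy2, hgh _ hy1]
  have hmul : ∀ l : List (E ⊕ E), ∃ A : Set Ω,
      Φ (wordEval K V E l * wordStar K V E l) = compOp K A id := by
    intro l
    obtain ⟨A, B, g, h, hA, hB, hgAB, _, hhg, _⟩ := key l
    refine ⟨A, ?_⟩
    rw [map_mul, hA, hB, compOp_mul]
    have hAinter : A ∩ g ⁻¹' B = A := by
      apply Set.inter_eq_self_of_subset_left
      exact fun x hx => hgAB hx
    rw [hAinter]
    exact compOp_congr A (h ∘ g) id hhg
  constructor
  · intro l _
    obtain ⟨A, hAeq⟩ := hmul l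
    exact ⟨A, by rw [hΦ]; exact hAeq⟩
  · intro l₁ l₂ _ _
    obtain ⟨A₁, hA₁⟩ := hmul l₁
    obtain ⟨A₂, hA₂⟩ := hmul l₂
    rw [hΦ, map_sub,
      map_mul Φ (wordEval K V E l₁ * wordStar K V E l₁) (wordEval K V E l₂ * wordStar K V E l₂),
      map_mul Φ (wordEval K V E l₂ * wordStar K V E l₂) (wordEval K V E l₁ * wordStar K V E l₁),
      hA₁, hA₂, compOp_mul, compOp_mul, Set.inter_comm]
    simp
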